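/- Let p_V(z_1, z_2, z_3) = z_1² + z_2² + z_3² − 2z_1z_2 − 2z_2z_3 − 2z_3z_1 be the Varopoulos–Kaijser polynomial. Then sup_{z ∈ D³} |p_V(z)| = 5, where D³ is the open unit polydisc in C³. -/

import Mathlib

/-!
Multiplying `z` by a unimodular `c` multiplies `p_V(z)` by `c²`, so it suffices to bound
`Re p_V` by `5` on the closed polydisc. Writing `z = x + iy` and using `xᵢ² ≤ 1 - yᵢ²`,
`Re p_V ≤ 5 - ((y₁ - y₂)² + (y₂ - y₃)² + (y₃ - y₁)²) - 2 (x₁x₂ + x₂x₃ + x₃x₁ + 1) ≤ 5`,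
where the last bracket is nonnegative on the cube `[-1, 1]³`. The value `5` is approached
along `(t, t, -t)`, where `p_V = 5t²`.
-/

/-- The Varopoulos–Kaijser polynomial
`p_V(z₁,z₂,z₃) = z₁² + z₂² + z₃² − 2z₁z₂ − 2z₂z₃ − 2z₃z₁`. -/
noncomputable def pV (z : Fin 3 → ℂ) : ℂ :=
  z 0 ^ 2 + z 1 ^ 2 + z 2 ^ 2 - 2 * z 0 * z 1 - 2 * z 1 * z 2 - 2 * z 2 * z 0

open Filter Topology

lemma neg_one_le_mul_add_mul_add_mul {a b c : ℝ} (ha : |a| ≤ 1) (hb : |b| ≤ 1) (hc : |c| ≤ 1) :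
    -1 ≤ a * b + b * c + c * a := by
  obtain ⟨ha₁, ha₂⟩ := abs_le.1 ha
  obtain ⟨hb₁, hb₂⟩ := abs_le.1 hb
  obtain ⟨hc₁, hc₂⟩ := abs_le.1 hc
  -- `(1 + a)(1 + b)(1 + c) + (1 - a)(1 - b)(1 - c) = 2 + 2 (ab + bc + ca)`
  nlinarith [mul_nonneg (mul_nonneg (neg_le_iff_add_nonneg.1 ha₁) (neg_le_iff_add_nonneg.1 hb₁))
      (neg_le_iff_add_nonneg.1 hc₁),
    mul_nonneg (mul_nonneg (sub_nonneg.2 ha₂) (sub_nonneg.2 hb₂)) (sub_nonneg.2 hc₂)]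

lemma Complex.re_sq_add_im_sq_le_one {w : ℂ} (hw : ‖w‖ ≤ 1) : w.re ^ 2 + w.im ^ 2 ≤ 1 := by
  have h := Complex.sq_norm w
  rw [Complex.normSq_apply] at h
  nlinarith [norm_nonneg w]

lemma re_pV_le_five {z : Fin 3 → ℂ} (hz : ∀ i, ‖z i‖ ≤ 1) : (pV z).re ≤ 5 := by
  have h := fun i => Complex.re_sq_add_im_sq_le_one (hz i)
  have habs : ∀ i, |(z i).re| ≤ 1 := fun i => (Complex.abs_re_le_norm _).trans (hz i)
  have he₂ := neg_one_le_mul_add_mul_add_mul (habs 0) (habs 1) (habs 2)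
  have hre : (pV z).re = (z 0).re ^ 2 + (z 1).re ^ 2 + (z 2).re ^ 2
      - 2 * ((z 0).re * (z 1).re + (z 1).re * (z 2).re + (z 2).re * (z 0).re)
      - ((z 0).im ^ 2 + (z 1).im ^ 2 + (z 2).im ^ 2
        - 2 * ((z 0).im * (z 1).im + (z 1).im * (z 2).im + (z 2).im * (z 0).im)) := by
    simp only [pV, Complex.sub_re, Complex.add_re, Complex.mul_re, Complex.mul_im, sq,
      Complex.re_ofNat, Complex.im_ofNat]
    ring
  rw [hre]
  nlinarith [h 0, h 1, h 2, sq_nonneg ((z 0).im - (z 1).im), sq_nonneg ((z 1).im - (z 2).im),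
    sq_nonneg ((z 2).im - (z 0).im)]

lemma pV_smul (c : ℂ) (z : Fin 3 → ℂ) : pV (c • z) = c ^ 2 * pV z := by
  simp only [pV, Pi.smul_apply, smul_eq_mul]
  ring

lemma Complex.exists_norm_eq_one_sq_mul_eq_norm (w : ℂ) :
    ∃ c : ℂ, ‖c‖ = 1 ∧ c ^ 2 * w = ‖w‖ := by
  set θ := w.arg
  have hunit : Complex.exp (↑(-(θ / 2)) * Complex.I) ^ 2 * Complex.exp (θ * Complex.I) = 1 := by
    rw [← Complex.exp_nat_mul, ← Complex.exp_add]
    push_cast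
    ring_nf
    exact Complex.exp_zero
  refine ⟨Complex.exp (↑(-(θ / 2)) * Complex.I), Complex.norm_exp_ofReal_mul_I _, ?_⟩
  calc _ = Complex.exp (↑(-(θ / 2)) * Complex.I) ^ 2 * (‖w‖ * Complex.exp (θ * Complex.I)) := by
        rw [Complex.norm_mul_exp_arg_mul_I]
    _ = ‖w‖ := by rw [mul_left_comm, hunit, mul_one]

lemma norm_pV_le_five {z : Fin 3 → ℂ} (hz : ∀ i, ‖z i‖ ≤ 1) : ‖pV z‖ ≤ 5 := by
  obtain ⟨c, hc, hcz⟩ := Complex.exists_norm_eq_one_sq_mul_eq_norm (pV z)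
  have hcz' : ∀ i, ‖(c • z) i‖ ≤ 1 := fun i => by
    simpa only [Pi.smul_apply, smul_eq_mul, norm_mul, hc, one_mul] using hz i
  simpa only [pV_smul, hcz, Complex.ofReal_re] using re_pV_le_five hcz'

lemma pV_diag (t : ℂ) : pV ![t, t, -t] = 5 * t ^ 2 := by
  simp only [pV, Matrix.cons_val]
  ring

lemma exists_polydisc_lt_norm_pV {w : ℝ} (hw : w < 5) :
    ∃ z : Fin 3 → ℂ, (∀ i, ‖z i‖ < 1) ∧ w < ‖pV z‖ := by
  have hlim : Tendsto (fun t : ℝ => 5 * t ^ 2) (𝓝[<] 1) (𝓝 5) :=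
    ((continuous_const.mul (continuous_pow 2)).tendsto' 1 5 (by norm_num)).mono_left
      nhdsWithin_le_nhds
  obtain ⟨t, hwt, ht⟩ :=
    ((hlim.eventually (lt_mem_nhds hw)).and (Ioo_mem_nhdsLT (zero_lt_one' ℝ))).exists
  refine ⟨![(t : ℂ), t, -t], ?_, ?_⟩
  · have ht' : |t| < 1 := abs_lt.2 ⟨by linarith [ht.1], ht.2⟩
    intro i
    fin_cases i <;> simpa
  · rw [pV_diag, ← Complex.ofReal_pow, ← Complex.ofReal_ofNat, ← Complex.ofReal_mul,
      Complex.norm_real, Real.norm_of_nonneg (by positivity)]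
    exact hwt

/-- `sup_{z ∈ 𝔻³} |p_V(z)| = 5` over the open unit polydisc `𝔻³ ⊆ ℂ³`. -/
theorem varopoulos_kaijser_sup :
    sSup ((fun z => ‖pV z‖) '' {z : Fin 3 → ℂ | ∀ i, ‖z i‖ < 1}) = 5 := by
  refine csSup_eq_of_forall_le_of_forall_lt_exists_gt ⟨_, 0, fun i => by simp, rfl⟩ ?_ ?_
  · rintro _ ⟨z, hz, rfl⟩
    exact norm_pV_le_five fun i => (hz i).le
  · intro w hw
    obtain ⟨z, hz, hwz⟩ := exists_polydisc_lt_norm_pV hw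
    exact ⟨_, ⟨z, hz, rfl⟩, hwz⟩
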